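/- If F is the joint CDF of random variables x₁,…,x_d with continuous marginal CDFs F₁,…,F_d, then there exists a unique function C : [0,1]^d → [0,1] (a copula, i.e. a d-variate CDF with uniform marginals on [0,1]) such that F(x₁,…,x_d) = C(F₁(x₁),…,F_d(x_d)) for all (x₁,…,x_d). -/

import Mathlib

/-!
The vector `U = (F₁(X₁), …, F_d(X_d))` has uniform marginals (probability integral transform,
which is where continuity of the `Fᵢ` enters), and each event `{Xᵢ ≤ xᵢ}` differs from
`{Fᵢ(Xᵢ) ≤ Fᵢ(xᵢ)}` by a null set. Hence the CDF `C` of `U` is a copula with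
`F = C ∘ (F₁, …, F_d)`. For uniqueness, the `Fᵢ` map onto `(0,1)`, so any other such copula
agrees with `C` on the open cube. A copula CDF only depends on the projection of its argument to
`[0,1]^d` and is Lipschitz, since every marginal is uniform, so it is determined by its values on
the open cube.
-/

open MeasureTheory
open scoped ProbabilityTheory

/-- The uniform distribution on `[0,1]`. -/
noncomputable def stdUniform : Measure ℝ := volume.restrict (Set.Icc 0 1)

/-- `C : ℝ^d → ℝ` is a (d-dimensional) copula if it is the joint CDF of some
probability measure on `[0,1]^d` all of whose one-dimensional marginals are
uniform on `[0,1]`. -/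
def IsCopula (d : ℕ) (C : (Fin d → ℝ) → ℝ) : Prop :=
  ∃ μ : Measure (Fin d → ℝ), IsProbabilityMeasure μ ∧
    (∀ i : Fin d, Measure.map (fun y => y i) μ = stdUniform) ∧
    (∀ x : Fin d → ℝ, C x = (μ {y | ∀ i, y i ≤ x i}).toReal)

open Set Filter ProbabilityTheory

lemma stdUniform_Iic (u : ℝ) : stdUniform (Iic u) = ENNReal.ofReal (min u 1) := by
  have : Iic u ∩ Icc 0 1 = Icc 0 (min u 1) := by
    ext t; simp only [mem_inter_iff, mem_Iic, mem_Icc, le_min_iff]; tauto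
  rw [stdUniform, Measure.restrict_apply measurableSet_Iic, this, Real.volume_Icc, sub_zero]

instance : IsProbabilityMeasure stdUniform :=
  ⟨by rw [stdUniform, Measure.restrict_apply_univ, Real.volume_Icc]; norm_num⟩

lemma stdUniform_real_Ioc_le (a b : ℝ) :
    stdUniform.real (Ioc a b) ≤
      |(projIcc (0 : ℝ) 1 zero_le_one b : ℝ) - projIcc (0 : ℝ) 1 zero_le_one a| := by
  have hsub : Ioc a b ∩ Icc 0 1 ⊆
      Icc (projIcc (0 : ℝ) 1 zero_le_one a : ℝ) (projIcc (0 : ℝ) 1 zero_le_one b) := by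
    rintro t ⟨⟨hat, htb⟩, ht⟩
    rw [coe_projIcc, coe_projIcc]
    exact ⟨max_le ht.1 ((min_le_right _ _).trans hat.le), le_max_of_le_right (le_min ht.2 htb)⟩
  rw [stdUniform, measureReal_restrict_apply measurableSet_Ioc]
  calc volume.real (Ioc a b ∩ Icc 0 1)
      ≤ volume.real (Icc (projIcc (0 : ℝ) 1 zero_le_one a : ℝ) (projIcc 0 1 zero_le_one b)) :=
        measureReal_mono hsub measure_Icc_lt_top.ne
    _ ≤ _ := by rw [Real.volume_real_Icc]; exact max_le (le_abs_self _) (abs_nonneg _)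

lemma measureReal_Iic_le_add {ι : Type*} [Fintype ι] {μ : Measure (ι → ℝ)} [IsFiniteMeasure μ]
    (hμ : ∀ i, μ.map (fun y => y i) = stdUniform) (x x' : ι → ℝ) :
    μ.real (Iic x) ≤ μ.real (Iic x') +
      ∑ i, |(projIcc (0 : ℝ) 1 zero_le_one (x i) : ℝ) - projIcc (0 : ℝ) 1 zero_le_one (x' i)| := by
  have hcover : Iic x ⊆ Iic x' ∪ ⋃ i, (fun y => y i) ⁻¹' Ioc (x' i) (x i) := by
    intro y hy
    by_cases hyx' : y ≤ x'
    · exact Or.inl hyx'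
    · obtain ⟨i, hi⟩ := not_forall.1 hyx'
      exact Or.inr (mem_iUnion.2 ⟨i, lt_of_not_ge hi, hy i⟩)
  have hmarg : ∀ i, μ.real ((fun y => y i) ⁻¹' Ioc (x' i) (x i)) =
      stdUniform.real (Ioc (x' i) (x i)) := fun i => by
    rw [← map_measureReal_apply (measurable_pi_apply i) measurableSet_Ioc, hμ i]
  calc μ.real (Iic x)
      ≤ μ.real (Iic x' ∪ ⋃ i, (fun y => y i) ⁻¹' Ioc (x' i) (x i)) := measureReal_mono hcover
    _ ≤ μ.real (Iic x') + ∑ i, μ.real ((fun y => y i) ⁻¹' Ioc (x' i) (x i)) :=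
        (measureReal_union_le _ _).trans (add_le_add_right (measureReal_iUnion_fintype_le _) _)
    _ ≤ _ := add_le_add_right
        (Finset.sum_le_sum fun i _ => (hmarg i).trans_le (stdUniform_real_Ioc_le _ _)) _

namespace IsCopula

variable {d : ℕ} {C C' : (Fin d → ℝ) → ℝ}

lemma le_add (hC : IsCopula d C) (x x' : Fin d → ℝ) :
    C x ≤ C x' +
      ∑ i, |(projIcc (0 : ℝ) 1 zero_le_one (x i) : ℝ) - projIcc (0 : ℝ) 1 zero_le_one (x' i)| := by
  obtain ⟨μ, _, hμ, hCμ⟩ := hC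
  rw [hCμ, hCμ]
  exact measureReal_Iic_le_add hμ x x'

lemma apply_projIcc (hC : IsCopula d C) (x : Fin d → ℝ) :
    C (fun i => projIcc (0 : ℝ) 1 zero_le_one (x i)) = C x :=
  le_antisymm (by simpa [projIcc_val] using hC.le_add (fun i => projIcc 0 1 zero_le_one (x i)) x)
    (by simpa [projIcc_val] using hC.le_add x fun i => projIcc 0 1 zero_le_one (x i))

lemma lipschitzWith (hC : IsCopula d C) : LipschitzWith d C := by
  refine LipschitzWith.of_le_add_mul d fun x x' => (hC.le_add x x').trans (add_le_add_right ?_ _)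
  calc ∑ i, |(projIcc (0 : ℝ) 1 zero_le_one (x i) : ℝ) - projIcc (0 : ℝ) 1 zero_le_one (x' i)|
      ≤ ∑ _i : Fin d, dist x x' := Finset.sum_le_sum fun i _ =>
        (abs_projIcc_sub_projIcc _).trans (dist_le_pi_dist x x' i)
    _ = d * dist x x' := by simp

lemma eq_of_eqOn_Ioo (hC : IsCopula d C) (hC' : IsCopula d C')
    (h : EqOn C C' (univ.pi fun _ => Ioo 0 1)) : C = C' := by
  have hcube : EqOn C C' (univ.pi fun _ => Icc 0 1) :=
    h.of_subset_closure hC.lipschitzWith.continuous.continuousOn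
      hC'.lipschitzWith.continuous.continuousOn (pi_mono fun _ _ => Ioo_subset_Icc_self)
      (by rw [closure_pi_set, closure_Ioo zero_ne_one])
  funext x
  rw [← hC.apply_projIcc, ← hC'.apply_projIcc]
  exact hcube fun i _ => (projIcc 0 1 zero_le_one (x i)).2

lemma eq_of_comp_eq (hC : IsCopula d C) (hC' : IsCopula d C') (G : Fin d → ℝ → ℝ)
    (hG : ∀ i, Ioo 0 1 ⊆ range (G i))
    (h : ∀ x : Fin d → ℝ, C (fun i => G i (x i)) = C' (fun i => G i (x i))) : C = C' := by
  refine hC.eq_of_eqOn_Ioo hC' fun c hc => ?_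
  choose x hx using fun i => hG i (hc i trivial)
  obtain rfl : (fun i => G i (x i)) = c := funext hx
  exact h x

end IsCopula

lemma exists_preimage_Iic_eq_Iic {G : ℝ → ℝ} (hc : Continuous G) (hm : Monotone G) {u : ℝ}
    (hne : (G ⁻¹' Iic u).Nonempty) (hbdd : BddAbove (G ⁻¹' Iic u)) :
    ∃ s, G s = u ∧ G ⁻¹' Iic u = Iic s := by
  set s := sSup (G ⁻¹' Iic u)
  have hs : G s ≤ u := (isClosed_Iic.preimage hc).csSup_mem hne hbdd
  refine ⟨s, le_antisymm hs (not_lt.1 fun hlt => ?_),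
    subset_antisymm (fun t ht => le_csSup hbdd ht) fun t ht => (hm ht).trans hs⟩
  obtain ⟨t, hst, ht⟩ := ((hc.tendsto s).eventually_lt_const hlt).exists_gt
  exact (le_csSup hbdd ht.le).not_gt hst

lemma map_cdf_eq_stdUniform (μ : Measure ℝ) [IsProbabilityMeasure μ] (hc : Continuous (cdf μ)) :
    μ.map (cdf μ) = stdUniform := by
  have := Measure.isProbabilityMeasure_map (μ := μ) hc.measurable.aemeasurable
  refine Measure.ext_of_Iic _ _ fun u => ?_
  rw [Measure.map_apply hc.measurable measurableSet_Iic, stdUniform_Iic]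
  rcases le_or_gt 1 u with hu1 | hu1
  · have hS : cdf μ ⁻¹' Iic u = univ := eq_univ_of_forall fun t => (cdf_le_one μ t).trans hu1
    rw [hS, measure_univ, min_eq_right hu1, ENNReal.ofReal_one]
  rcases (cdf μ ⁻¹' Iic u).eq_empty_or_nonempty with hS | hS
  · have hu0 : u ≤ 0 := not_lt.1 fun hu0 => by
      obtain ⟨t, ht⟩ := ((tendsto_cdf_atBot μ).eventually_lt_const hu0).exists
      exact hS.subset (show t ∈ cdf μ ⁻¹' Iic u from ht.le)
    rw [hS, measure_empty, ENNReal.ofReal_of_nonpos (min_le_of_left_le hu0)]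
  · have hbdd : BddAbove (cdf μ ⁻¹' Iic u) := by
      obtain ⟨T, hT⟩ := eventually_atTop.1 ((tendsto_cdf_atTop μ).eventually_const_lt hu1)
      exact ⟨T, fun t ht => not_lt.1 fun hTt => (hT t hTt.le).not_ge ht⟩
    obtain ⟨s, hsu, hS⟩ := exists_preimage_Iic_eq_Iic hc (monotone_cdf μ) hS hbdd
    rw [hS, ← ofReal_cdf, hsu, min_eq_left hu1.le]

section RandomVariable

variable {Ω : Type*} [MeasurableSpace Ω] {P : Measure Ω} [IsProbabilityMeasure P]

lemma map_cdf_comp_eq_stdUniform {X : Ω → ℝ} (hX : Measurable X)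
    (hc : Continuous (cdf (P.map X))) :
    P.map (fun ω => cdf (P.map X) (X ω)) = stdUniform := by
  have := Measure.isProbabilityMeasure_map (μ := P) hX.aemeasurable
  rw [show (fun ω => cdf (P.map X) (X ω)) = cdf (P.map X) ∘ X from rfl,
    ← Measure.map_map hc.measurable hX]
  exact map_cdf_eq_stdUniform _ hc

lemma cdf_comp_le_cdf_ae_eq {X : Ω → ℝ} (hX : Measurable X) (hc : Continuous (cdf (P.map X)))
    (t : ℝ) :
    {ω | cdf (P.map X) (X ω) ≤ cdf (P.map X) t} =ᵐ[P] {ω | X ω ≤ t} := by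
  have := Measure.isProbabilityMeasure_map (μ := P) hX.aemeasurable
  refine (ae_eq_of_subset_of_measure_ge (fun ω hω => monotone_cdf _ hω) (le_of_eq ?_)
    (hX measurableSet_Iic).nullMeasurableSet (measure_ne_top _ _)).symm
  calc P {ω | cdf (P.map X) (X ω) ≤ cdf (P.map X) t}
      = stdUniform (Iic (cdf (P.map X) t)) := by
        have hm : Measurable fun ω => cdf (P.map X) (X ω) := hc.measurable.comp hX
        rw [← map_cdf_comp_eq_stdUniform hX hc, Measure.map_apply hm measurableSet_Iic]
        rfl
    _ = P {ω | X ω ≤ t} := by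
        rw [stdUniform_Iic, min_eq_left (cdf_le_one _ _), ofReal_cdf,
          Measure.map_apply hX measurableSet_Iic]
        rfl

lemma exists_isCopula_of_continuous_cdf {d : ℕ} (X : Fin d → Ω → ℝ)
    (hX : ∀ i, Measurable (X i)) (hc : ∀ i, Continuous (cdf (P.map (X i)))) :
    ∃ C, IsCopula d C ∧ ∀ x : Fin d → ℝ,
      (P {ω | ∀ i, X i ω ≤ x i}).toReal = C (fun i => cdf (P.map (X i)) (x i)) := by
  set T : Ω → Fin d → ℝ := fun ω i => cdf (P.map (X i)) (X i ω)
  have hT : Measurable T := measurable_pi_lambda _ fun i => (hc i).measurable.comp (hX i)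
  refine ⟨fun x => (P.map T {y | ∀ i, y i ≤ x i}).toReal,
    ⟨P.map T, Measure.isProbabilityMeasure_map hT.aemeasurable, fun i => ?_, fun _ => rfl⟩,
    fun x => ?_⟩
  · rw [Measure.map_map (measurable_pi_apply i) hT]
    exact map_cdf_comp_eq_stdUniform (hX i) (hc i)
  · show _ = (P.map T (Iic _)).toReal
    rw [Measure.map_apply hT measurableSet_Iic]
    have h := Filter.EventuallyEq.countable_iInter fun i =>
      cdf_comp_le_cdf_ae_eq (hX i) (hc i) (x i)
    simp only [iInter_ofPred] at h
    exact congrArg ENNReal.toReal (measure_congr h).symm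

end RandomVariable

lemma Ioo_subset_range_cdf {μ : Measure ℝ} (hc : Continuous (cdf μ)) :
    Ioo 0 1 ⊆ range (cdf μ) := fun _ hu =>
  mem_range_of_exists_le_of_exists_ge hc ((tendsto_cdf_atBot μ).eventually_le_const hu.1).exists
    ((tendsto_cdf_atTop μ).eventually_const_le hu.2).exists

/-- **Sklar's theorem (continuous marginals).** If `F` is the joint CDF of
random variables `X 0, …, X (d-1)` whose marginal CDFs `Fm i` are continuous,
then there is a unique copula `C` with `F x = C (Fm 0 (x 0), …, Fm (d-1) (x (d-1)))`. -/
theorem sklar_exists_unique_copula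
    {Ω : Type*} [MeasureSpace Ω] [IsProbabilityMeasure (ℙ : Measure Ω)]
    (d : ℕ) (X : Fin d → Ω → ℝ) (hX : ∀ i, Measurable (X i))
    (F : (Fin d → ℝ) → ℝ)
    (hF : ∀ x, F x = (ℙ {ω | ∀ i, X i ω ≤ x i}).toReal)
    (Fm : Fin d → ℝ → ℝ)
    (hFm : ∀ i t, Fm i t = (ℙ {ω | X i ω ≤ t}).toReal)
    (hcont : ∀ i, Continuous (Fm i)) :
    ∃! C : (Fin d → ℝ) → ℝ, IsCopula d C ∧
      ∀ x : Fin d → ℝ, F x = C (fun i => Fm i (x i)) := by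
  obtain rfl : Fm = fun i => ⇑(cdf ((ℙ : Measure Ω).map (X i))) := by
    funext i t
    have := Measure.isProbabilityMeasure_map (μ := ℙ) (hX i).aemeasurable
    rw [hFm, cdf_eq_real, map_measureReal_apply (hX i) measurableSet_Iic]
    rfl
  obtain ⟨C, hC, hFC⟩ := exists_isCopula_of_continuous_cdf X hX hcont
  refine ⟨C, ⟨hC, fun x => (hF x).trans (hFC x)⟩, fun C' ⟨hC', hFC'⟩ => ?_⟩
  exact hC'.eq_of_comp_eq hC _ (fun i => Ioo_subset_range_cdf (hcont i))
    fun x => (hFC' x).symm.trans ((hF x).trans (hFC x))
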